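/- Let X_1,…,X_k be subcomplexes of the join V_1 * ⋯ * V_m and suppose each X_j is a single simplex σ_j together with all its faces. Then the generalized multiple point complex M(σ_1,…,σ_k) is isomorphic, as a simplicial complex, to the simplex on the vertex set ⋂_{j=1}^k π(σ_j) ⊆ {1,…,m}; in particular M(σ_1,…,σ_k) has vanishing reduced rational homology in all nonnegative dimensions when it is nonempty. -/

import Mathlib

open Classical in
/-- A (possibly abstract) simplicial complex: a set of finsets closed under taking subsets. -/
def IsComplex {V : Type*} (X : Set (Finset V)) : Prop := ∀ s ∈ X, ∀ t ⊆ s, t ∈ X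

/-- Ordered `n`-tuples of vertices spanning a simplex of `X` (repetitions allowed). -/
def Tup {V : Type*} [DecidableEq V] (X : Set (Finset V)) (n : ℕ) : Type _ :=
  {σ : Fin n → V // Finset.image σ Finset.univ ∈ X}

/-- Rational ordered simplicial chains on tuples of `n` vertices. -/
abbrev Chains {V : Type*} [DecidableEq V] (X : Set (Finset V)) (n : ℕ) := Tup X n →₀ ℚ

open Classical in
noncomputable def gen {V : Type*} [DecidableEq V] (X : Set (Finset V)) {n : ℕ}
    (τ : Fin n → V) : Chains X n :=
  if h : Finset.image τ Finset.univ ∈ X then Finsupp.single ⟨τ, h⟩ 1 else 0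

/-- The simplicial boundary map. -/
noncomputable def bdry {V : Type*} [DecidableEq V] (X : Set (Finset V)) (n : ℕ) :
    Chains X (n + 1) →ₗ[ℚ] Chains X n :=
  Finsupp.lsum ℚ fun σ => LinearMap.toSpanSingleton ℚ (Chains X n)
    (∑ i : Fin (n + 1), ((-1 : ℚ) ^ (i : ℕ)) • gen X (σ.1 ∘ i.succAbove))

/-- Reduced rational homology `H̃_i(X;ℚ)` (chains on `i+1` vertices correspond to
`i`-dimensional simplices; tuples with `0` vertices give the augmentation). -/
noncomputable abbrev reducedHomology {V : Type*} [DecidableEq V] (X : Set (Finset V)) (i : ℕ) :=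
  LinearMap.ker (bdry X i) ⧸
    Submodule.comap (LinearMap.ker (bdry X i)).subtype (LinearMap.range (bdry X (i + 1)))

/-- `H̃_i(X;ℚ) = 0`. -/
def HomologyVanishes {V : Type*} [DecidableEq V] (X : Set (Finset V)) (i : ℕ) : Prop :=
  ∀ x : reducedHomology X i, x = 0

/-- The induced subcomplex on a vertex subset. -/
def induced {V : Type*} (X : Set (Finset V)) (S : Finset V) : Set (Finset V) :=
  {s ∈ X | s ⊆ S}

/-- The rational Leray number `L(X)`. -/
noncomputable def lerayNumber {V : Type*} [DecidableEq V] (X : Set (Finset V)) : ℕ :=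
  sInf {d | ∀ S : Finset V, ∀ i, d ≤ i → HomologyVanishes (induced X S) i}

/-- The generalized multiple point complex `M(X_1,…,X_k)`. Its vertices are pairs
`(i, w)` with `w ∈ V_i^k` (`V_i = p⁻¹(i)`); a finset of such vertices is a simplex iff the
levels `i` are pairwise distinct and, for each coordinate `s`, the set of `s`-th components
is a simplex of `X_s`. -/
def Mcplx {V : Type*} [DecidableEq V] {m k : ℕ} (p : V → Fin m)
    (Xs : Fin k → Set (Finset V)) :
    Set (Finset ((i : Fin m) × {w : Fin k → V // ∀ s, p (w s) = i})) :=
  {T | (∀ w ∈ T, ∀ w' ∈ T, w.1 = w'.1 → w = w') ∧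
    ∀ s : Fin k, T.image (fun w => w.2.1 s) ∈ Xs s}

/-- A simplicial isomorphism of `X` onto `Y` induced by a vertex map `f`: `f` is injective on
vertices of `X`, maps simplices of `X` to simplices of `Y`, and every simplex of `Y` is the
image of a simplex of `X`. -/
def IsSimplicialIso {A B : Type*} [DecidableEq A] [DecidableEq B] (f : A → B)
    (X : Set (Finset A)) (Y : Set (Finset B)) : Prop :=
  Set.InjOn f {a : A | {a} ∈ X} ∧ (∀ s ∈ X, s.image f ∈ Y) ∧
    (∀ t ∈ Y, ∃ s ∈ X, s.image f = t)


section VanishingAux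
variable {V : Type*} [DecidableEq V]

lemma gen_eq {X : Set (Finset V)} {n : ℕ} {τ : Fin n → V}
    (h : Finset.image τ Finset.univ ∈ X) : gen X τ = Finsupp.single ⟨τ, h⟩ 1 := dif_pos h

lemma bdry_single {X : Set (Finset V)} {n : ℕ} (σ : Tup X (n+1)) (b : ℚ) :
    bdry X n (Finsupp.single σ b) =
      b • ∑ i : Fin (n + 1), ((-1 : ℚ) ^ (i : ℕ)) • gen X (σ.1 ∘ i.succAbove) := by
  simp [bdry]

noncomputable def coneMap (X : Set (Finset V)) (v : V) (n : ℕ) :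
    Chains X n →ₗ[ℚ] Chains X (n+1) :=
  Finsupp.lsum ℚ fun σ => LinearMap.toSpanSingleton ℚ _ (gen X (Fin.cons v σ.1))

lemma coneMap_single {X : Set (Finset V)} (v : V) {n : ℕ} (σ : Tup X n) (b : ℚ) :
    coneMap X v n (Finsupp.single σ b) = b • gen X (Fin.cons v σ.1) := by
  simp [coneMap]

set_option linter.unusedSectionVars false
set_option linter.unusedVariables false

variable {X : Set (Finset V)} (hX : ∀ t : Finset V, t ∈ X ↔ ∀ a ∈ t, {a} ∈ X)
include hX

lemma mem_of_subset' {s t : Finset V} (h : s ⊆ t) (ht : t ∈ X) : s ∈ X := by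
  rw [hX] at ht ⊢; exact fun a ha => ht a (h ha)

lemma face_mem {n n' : ℕ} (f : Fin n' → Fin n) {τ : Fin n → V}
    (h : Finset.image τ Finset.univ ∈ X) : Finset.image (τ ∘ f) Finset.univ ∈ X := by
  refine mem_of_subset' hX ?_ h
  intro a ha
  simp only [Finset.mem_image, Finset.mem_univ, true_and] at ha ⊢
  obtain ⟨i, rfl⟩ := ha
  exact ⟨f i, rfl⟩

lemma cons_mem {v : V} (hv : ({v} : Finset V) ∈ X) {n : ℕ} {τ : Fin n → V}
    (h : Finset.image τ Finset.univ ∈ X) :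
    Finset.image (Fin.cons v τ) Finset.univ ∈ X := by
  rw [hX]
  intro a ha
  simp only [Finset.mem_image, Finset.mem_univ, true_and] at ha
  obtain ⟨i, rfl⟩ := ha
  induction i using Fin.cases with
  | zero => simpa using hv
  | succ j =>
    rw [Fin.cons_succ]
    exact (hX _).mp h _ (Finset.mem_image_of_mem _ (Finset.mem_univ j))

lemma coneMap_gen {v : V} (hv : ({v} : Finset V) ∈ X) {n : ℕ} {τ : Fin n → V}
    (h : Finset.image τ Finset.univ ∈ X) :
    coneMap X v n (gen X τ) = gen X (Fin.cons v τ) := by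
  rw [gen_eq h]; exact (coneMap_single v (⟨τ, h⟩ : Tup X n) 1).trans (one_smul _ _)

lemma cone_identity {v : V} (hv : ({v} : Finset V) ∈ X) (n : ℕ) :
    (bdry X (n+1)).comp (coneMap X v (n+1)) =
      LinearMap.id - (coneMap X v n).comp (bdry X n) := by
  apply Finsupp.lhom_ext
  intro σ b
  have hface : ∀ j : Fin (n+1), Finset.image (σ.1 ∘ j.succAbove) Finset.univ ∈ X :=
    fun j => face_mem hX _ σ.2
  have h0 : (Fin.cons v σ.1) ∘ (Fin.succAbove (0 : Fin (n+2))) = σ.1 := by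
    funext j; simp [Fin.succAbove_zero]
  have hs : ∀ j : Fin (n+1), (Fin.cons v σ.1) ∘ (Fin.succAbove j.succ)
      = Fin.cons v (σ.1 ∘ j.succAbove) := by
    intro j; funext t
    induction t using Fin.cases with
    | zero => simp
    | succ s => simp [Fin.succ_succAbove_succ]
  have hsingle : Finsupp.single σ b = b • gen X σ.1 := by
    rw [gen_eq σ.2]; exact (Finsupp.smul_single_one _ b).symm
  rw [LinearMap.comp_apply, coneMap_single, map_smul, gen_eq (cons_mem hX hv σ.2)]
  erw [bdry_single]
  rw [one_smul, Fin.sum_univ_succ, h0,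
    LinearMap.sub_apply, LinearMap.id_apply, LinearMap.comp_apply, bdry_single, map_smul,
    map_sum, hsingle, gen_eq σ.2]
  simp only [hs, Fin.val_succ, Fin.val_zero, pow_zero, pow_succ, one_smul, map_smul,
    coneMap_gen hX hv (hface _), mul_neg_one, neg_smul, Finset.sum_neg_distrib, smul_add,
    smul_neg, smul_sub, gen_eq σ.2]
  abel

lemma full_vanishes (i : ℕ) : HomologyVanishes X i := by
  intro x
  obtain ⟨⟨c, hc⟩, rfl⟩ := Submodule.Quotient.mk_surjective _ x
  rw [Submodule.Quotient.mk_eq_zero, Submodule.mem_comap, Submodule.subtype_apply]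
  by_cases hvert : ∃ v : V, ({v} : Finset V) ∈ X
  · obtain ⟨v, hv⟩ := hvert
    refine ⟨coneMap X v (i+1) c, ?_⟩
    have h := congrArg (fun φ : Chains X (i+1) →ₗ[ℚ] Chains X (i+1) => φ c)
      (cone_identity hX hv i)
    simp only [LinearMap.comp_apply, LinearMap.sub_apply, LinearMap.id_apply] at h
    rw [h, LinearMap.mem_ker.mp hc, map_zero, sub_zero]
  · have hc0 : c = 0 := by
      ext σ
      exact absurd (mem_of_subset' hX (by
        intro a ha
        rw [Finset.mem_singleton] at ha
        subst ha
        exact Finset.mem_image_of_mem _ (Finset.mem_univ (0 : Fin (i+1)))) σ.2)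
        (fun h => hvert ⟨_, h⟩)
    refine ⟨0, ?_⟩
    simp [hc0]

end VanishingAux

/-- if each `X_j` is the full simplex on `σ_j`, then `M(σ_1,…,σ_k)` is isomorphic
to the simplex on the vertex set `⋂_j π(σ_j) ⊆ Fin m`, and has vanishing reduced rational
homology in all nonnegative dimensions. -/
theorem stmt9 {V : Type*} [DecidableEq V] {m k : ℕ} (p : V → Fin m)
    (σs : Fin k → Finset V)
    (hjoin : ∀ j, ∀ v ∈ σs j, ∀ w ∈ σs j, p v = p w → v = w) :
    (∃ f, IsSimplicialIso f (Mcplx p (fun j => {t : Finset V | t ⊆ σs j}))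
      {t : Finset (Fin m) | t ⊆ Finset.univ.inf (fun j => (σs j).image p)}) ∧
    ∀ j : ℕ, HomologyVanishes (Mcplx p (fun j => {t : Finset V | t ⊆ σs j})) j := by
  set M := Mcplx p (fun j => {t : Finset V | t ⊆ σs j}) with hM
  have hvert : ∀ a : (i : Fin m) × {w : Fin k → V // ∀ s, p (w s) = i},
      ({a} : Finset _) ∈ M ↔ ∀ s, a.2.1 s ∈ σs s := by
    intro a
    constructor
    · rintro ⟨_, h2⟩ s
      have := h2 s
      simp only [Finset.image_singleton, Set.mem_setOf_eq,
        Finset.singleton_subset_iff] at this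
      exact this
    · intro h
      refine ⟨by simp, fun s => ?_⟩
      simp only [Finset.image_singleton, Set.mem_setOf_eq, Finset.singleton_subset_iff]
      exact h s
  have huniq : ∀ a a' : (i : Fin m) × {w : Fin k → V // ∀ s, p (w s) = i},
      ({a} : Finset _) ∈ M → ({a'} : Finset _) ∈ M → a.1 = a'.1 → a = a' := by
    rintro ⟨i, w, hw⟩ ⟨i', w', hw'⟩ ha ha' h
    dsimp only at h
    subst h
    rw [hvert] at ha ha'
    congr 1
    ext s
    exact hjoin s _ (ha s) _ (ha' s) (by rw [hw s, hw' s])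
  have hXM : ∀ T, T ∈ M ↔ ∀ a ∈ T, ({a} : Finset _) ∈ M := by
    intro T
    constructor
    · rintro ⟨h1, h2⟩ a haT
      rw [hvert]
      intro s
      exact (h2 s) (Finset.mem_image_of_mem _ haT)
    · intro h
      refine ⟨fun w hw w' hw' he => huniq _ _ (h w hw) (h w' hw') he, fun s => ?_⟩
      intro x hx
      simp only [Finset.mem_image] at hx
      obtain ⟨a, ha, rfl⟩ := hx
      exact (hvert a).mp (h a ha) s
  constructor
  · refine ⟨Sigma.fst, fun a ha a' ha' h => huniq _ _ ha ha' h, ?_, ?_⟩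
    · intro T hT
      simp only [Set.mem_setOf_eq]
      intro i hi
      rw [Finset.mem_image] at hi
      obtain ⟨a, haT, rfl⟩ := hi
      rw [Finset.mem_inf]
      intro j _
      have h2 : a.2.1 j ∈ σs j := (hT.2 j) (Finset.mem_image_of_mem _ haT)
      exact Finset.mem_image.mpr ⟨_, h2, a.2.2 j⟩
    · intro t ht
      simp only [Set.mem_setOf_eq] at ht
      have hch : ∀ x : {i // i ∈ t}, ∀ s : Fin k, ∃ v, v ∈ σs s ∧ p v = x.1 := by
        rintro ⟨i, hi⟩ s
        have h1 := ht hi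
        rw [Finset.mem_inf] at h1
        obtain ⟨v, hv, hpv⟩ := Finset.mem_image.mp (h1 s (Finset.mem_univ s))
        exact ⟨v, hv, hpv⟩
      choose g hg1 hg2 using hch
      refine ⟨t.attach.image (fun x => ⟨x.1, ⟨g x, fun s => hg2 x s⟩⟩), ?_, ?_⟩
      · rw [hXM]
        intro a ha
        rw [Finset.mem_image] at ha
        obtain ⟨x, _, rfl⟩ := ha
        rw [hvert]
        exact fun s => hg1 x s
      · rw [Finset.image_image]
        exact Finset.attach_image_val
  · exact fun j => full_vanishes hXM j
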